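/- arXiv:2303.04675 — 2 statements merged into one kernel-verified Lean document; each statement's English description precedes it below -/
import Mathlib

section
/- Among all matrices of rank at most k, the truncated SVD S_k minimizes the Frobenius distance to S (Eckart–Young theorem): for every matrix B with rank(B) ≤ k, ‖S − B‖_F ≥ ‖S − S_k‖_F. -/
/-!
Let the columns of `W` be an orthonormal basis of the column space of `B`, so that `P = W Wᵀ`
fixes `B`. Then `‖S - B‖² ≥ ‖(1 - P) S‖² = ‖S‖² - ‖Wᵀ S‖² = ∑ₗ σₗ² (1 - gₗ)`, where
`gₗ = ‖Wᵀ uₗ‖²`. Bessel's inequality gives `0 ≤ gₗ ≤ 1` and `∑ₗ gₗ ≤ ‖W‖² = rank B ≤ k`, and for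
such weights the sum `∑ₗ σₗ² gₗ` with `σₗ²` decreasing is at most `∑_{l<k} σₗ²`. What remains,
`∑_{l≥k} σₗ²`, is `‖S - S_k‖²`.
-/

open Matrix Finset

lemma Finset.sum_mul_le_sum_of_le_of_le {ι : Type*} [Fintype ι] {s : Finset ι} {f q : ι → ℝ}
    {c : ℝ} (hc : 0 ≤ c) (hs : ∀ i ∈ s, c ≤ f i) (hsc : ∀ i ∉ s, f i ≤ c)
    (hq₀ : ∀ i, 0 ≤ q i) (hq₁ : ∀ i, q i ≤ 1) (hq : ∑ i, q i ≤ #s) :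
    ∑ i, f i * q i ≤ ∑ i ∈ s, f i := by
  classical
  have hshift : ∑ i, (f i - c) * q i ≤ ∑ i, if i ∈ s then f i - c else 0 := by
    refine Finset.sum_le_sum fun i _ => ?_
    split_ifs with hi
    · exact mul_le_of_le_one_right (sub_nonneg.2 (hs i hi)) (hq₁ i)
    · exact mul_nonpos_of_nonpos_of_nonneg (sub_nonpos.2 (hsc i hi)) (hq₀ i)
  rw [Finset.sum_ite_mem, univ_inter, Finset.sum_sub_distrib, Finset.sum_const,
    nsmul_eq_mul] at hshift
  simp only [sub_mul, Finset.sum_sub_distrib, ← Finset.mul_sum] at hshift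
  have := mul_le_mul_of_nonneg_left hq hc
  linarith

lemma Fin.sum_mul_le_sum_filter_lt_of_antitone {r k : ℕ} {f q : Fin r → ℝ} (hf : Antitone f)
    (hf₀ : ∀ i, 0 ≤ f i) (hq₀ : ∀ i, 0 ≤ q i) (hq₁ : ∀ i, q i ≤ 1) (hq : ∑ i, q i ≤ k) :
    ∑ i, f i * q i ≤ ∑ i ∈ univ.filter (fun i : Fin r => (i : ℕ) < k), f i := by
  have hcard : ∑ i, q i ≤ #(univ.filter (fun i : Fin r => (i : ℕ) < k)) := by
    have hr : ∑ i, q i ≤ r := by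
      simpa using Finset.sum_le_sum fun i (_ : i ∈ univ) => hq₁ i
    rw [Fin.card_filter_val_lt, Nat.cast_min]
    exact le_min hr hq
  by_cases hk : k < r
  · refine Finset.sum_mul_le_sum_of_le_of_le (c := f ⟨k, hk⟩) (hf₀ _) (fun i hi => hf ?_)
      (fun i hi => hf ?_) hq₀ hq₁ hcard
    · simp only [mem_filter, mem_univ, true_and] at hi
      exact Fin.le_def.2 hi.le
    · simp only [mem_filter, mem_univ, true_and, not_lt] at hi
      exact Fin.le_def.2 hi
  · refine Finset.sum_mul_le_sum_of_le_of_le le_rfl (fun i _ => hf₀ i) (fun i hi => ?_) hq₀ hq₁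
      hcard
    simp only [mem_filter, mem_univ, true_and] at hi
    omega

namespace Matrix

variable {m n r : Type*} [Fintype r]

lemma mul_diagonal_mul_transpose_eq_sum {R : Type*} [CommSemiring R] [DecidableEq r]
    (U : Matrix m r R) (V : Matrix n r R) (σ : r → R) :
    U * diagonal σ * Vᵀ = ∑ l, σ l • vecMulVec (fun a => U a l) (fun b => V b l) := by
  ext i j
  rw [mul_apply]
  simp only [mul_diagonal, transpose_apply, sum_apply, smul_apply, vecMulVec_apply, smul_eq_mul]
  exact Finset.sum_congr rfl fun l _ => by ring

lemma mul_diagonal_mul_transpose_sub_sum_eq {R : Type*} [CommRing R] [DecidableEq r]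
    (U : Matrix m r R) (V : Matrix n r R) (σ : r → R) (s : Finset r) :
    U * diagonal σ * Vᵀ - ∑ l ∈ s, σ l • vecMulVec (fun a => U a l) (fun b => V b l)
      = U * diagonal (fun l => if l ∈ s then 0 else σ l) * Vᵀ := by
  rw [mul_diagonal_mul_transpose_eq_sum, mul_diagonal_mul_transpose_eq_sum,
    sub_eq_iff_eq_add, ← Finset.sum_compl_add_sum s]
  congr 1
  rw [← Fintype.sum_ite_mem]
  refine Finset.sum_congr rfl fun l _ => ?_
  by_cases h : l ∈ s <;> simp [h]

variable [Fintype m]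

lemma transpose_mul_transpose_mul (W : Matrix m r ℝ) (X : Matrix m n ℝ) :
    (Wᵀ * X)ᵀ * (Wᵀ * X) = Xᵀ * (W * Wᵀ * X) := by
  simp only [transpose_mul, transpose_transpose, Matrix.mul_assoc]

variable [Fintype n]

lemma sum_sum_sq_eq_trace_transpose_mul_self (A : Matrix m n ℝ) :
    ∑ i, ∑ j, A i j ^ 2 = trace (Aᵀ * A) := by
  simp only [trace, diag, mul_apply, transpose_apply, sq]
  exact Finset.sum_comm

lemma posSemidef_transpose_mul_self (A : Matrix m n ℝ) : (Aᵀ * A).PosSemidef :=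
  posSemidef_conjTranspose_mul_self A

lemma posSemidef_one_sub_mul_transpose [DecidableEq m] [DecidableEq r] {W : Matrix m r ℝ}
    (hW : Wᵀ * W = 1) : (1 - W * Wᵀ).PosSemidef := by
  have hQ : (1 - W * Wᵀ)ᵀ * (1 - W * Wᵀ) = 1 - W * Wᵀ := by
    rw [transpose_sub, transpose_one, transpose_mul, transpose_transpose, Matrix.sub_mul,
      Matrix.mul_sub, Matrix.mul_sub, Matrix.mul_assoc W Wᵀ (W * Wᵀ),
      ← Matrix.mul_assoc Wᵀ W Wᵀ, hW]
    simp only [Matrix.one_mul, Matrix.mul_one]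
    abel
  exact hQ ▸ posSemidef_transpose_mul_self _

lemma diag_transpose_mul_self_le [DecidableEq m] [DecidableEq r] {W : Matrix m r ℝ}
    (hW : Wᵀ * W = 1) (X : Matrix m n ℝ) (j : n) :
    ((Wᵀ * X)ᵀ * (Wᵀ * X)) j j ≤ (Xᵀ * X) j j := by
  have h := ((posSemidef_one_sub_mul_transpose hW).conjTranspose_mul_mul_same X).diag_nonneg
    (i := j)
  rw [conjTranspose_eq_transpose_of_trivial, Matrix.mul_sub, Matrix.sub_mul, Matrix.mul_one,
    Matrix.mul_assoc, sub_apply, sub_nonneg] at h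
  rwa [transpose_mul_transpose_mul]

lemma trace_transpose_mul_self_le [DecidableEq m] [DecidableEq r] {W : Matrix m r ℝ}
    (hW : Wᵀ * W = 1) (X : Matrix m n ℝ) : trace ((Wᵀ * X)ᵀ * (Wᵀ * X)) ≤ trace (Xᵀ * X) :=
  Finset.sum_le_sum fun j _ => diag_transpose_mul_self_le hW X j

lemma trace_transpose_mul_self_transpose_mul_le_card [DecidableEq m] [DecidableEq r]
    {d : Type*} [Fintype d] [DecidableEq d] {U : Matrix m r ℝ} {W : Matrix m d ℝ} (hU : Uᵀ * U = 1)
    (hW : Wᵀ * W = 1) : trace ((Wᵀ * U)ᵀ * (Wᵀ * U)) ≤ Fintype.card d := by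
  calc trace ((Wᵀ * U)ᵀ * (Wᵀ * U)) = trace ((Uᵀ * W)ᵀ * (Uᵀ * W)) := by
        rw [trace_mul_comm, transpose_mul, transpose_mul, transpose_transpose,
          transpose_transpose]
    _ ≤ trace (Wᵀ * W) := trace_transpose_mul_self_le hU W
    _ = Fintype.card d := by rw [hW, trace_one]

lemma trace_transpose_mul_self_sub_le (W : Matrix m r ℝ) {B : Matrix m n ℝ}
    (hB : W * Wᵀ * B = B) (S : Matrix m n ℝ) :
    trace (Sᵀ * S) - trace ((Wᵀ * S)ᵀ * (Wᵀ * S)) ≤ trace ((S - B)ᵀ * (S - B)) := by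
  set P := W * Wᵀ
  have hBt : Bᵀ * P = Bᵀ := by
    have hP : Pᵀ = P := by rw [transpose_mul, transpose_transpose]
    rw [← transpose_transpose (Bᵀ * P), transpose_mul, transpose_transpose, hP, hB]
  have hres : (S - B) - P * (S - B) = S - P * S := by rw [Matrix.mul_sub, hB]; abel
  have key : (S - B)ᵀ * (S - B) - (S - B)ᵀ * (P * (S - B)) = Sᵀ * S - Sᵀ * (P * S) := by
    rw [← Matrix.mul_sub, hres, transpose_sub, Matrix.sub_mul, Matrix.mul_sub Bᵀ,
      ← Matrix.mul_assoc, hBt, sub_self, sub_zero, Matrix.mul_sub]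
  have hnn := (posSemidef_transpose_mul_self (Wᵀ * (S - B))).trace_nonneg
  rw [transpose_mul_transpose_mul] at hnn ⊢
  rw [← trace_sub, ← key, trace_sub]
  linarith

lemma trace_transpose_mul_self_mul_diagonal_mul_transpose {k : Type*} [Fintype k]
    [DecidableEq r] (C : Matrix k r ℝ) {V : Matrix n r ℝ} (hV : Vᵀ * V = 1) (σ : r → ℝ) :
    trace ((C * diagonal σ * Vᵀ)ᵀ * (C * diagonal σ * Vᵀ)) = ∑ l, σ l ^ 2 * (Cᵀ * C) l l := by
  have hgram : (C * diagonal σ * Vᵀ)ᵀ * (C * diagonal σ * Vᵀ)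
      = V * (diagonal σ * (Cᵀ * C) * diagonal σ) * Vᵀ := by
    simp only [transpose_mul, transpose_transpose, diagonal_transpose, Matrix.mul_assoc]
  rw [hgram, trace_mul_comm, ← Matrix.mul_assoc, hV, Matrix.one_mul]
  simp only [trace, diag, diagonal_mul, mul_diagonal]
  exact Finset.sum_congr rfl fun l _ => by ring

lemma trace_transpose_mul_self_sub_sum_eq [DecidableEq r] {U : Matrix m r ℝ}
    {V : Matrix n r ℝ} (hU : Uᵀ * U = 1) (hV : Vᵀ * V = 1) (σ : r → ℝ) (s : Finset r) :
    trace ((U * diagonal σ * Vᵀ - ∑ l ∈ s, σ l • vecMulVec (fun a => U a l) (fun b => V b l))ᵀ *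
      (U * diagonal σ * Vᵀ - ∑ l ∈ s, σ l • vecMulVec (fun a => U a l) (fun b => V b l)))
      = ∑ l ∈ sᶜ, σ l ^ 2 := by
  rw [mul_diagonal_mul_transpose_sub_sum_eq,
    trace_transpose_mul_self_mul_diagonal_mul_transpose _ hV, hU, ← Fintype.sum_ite_mem sᶜ]
  refine Finset.sum_congr rfl fun l _ => ?_
  by_cases h : l ∈ s <;> simp [h]

lemma exists_orthonormal_cols_mul_transpose_mul_eq (A : Matrix m n ℝ) :
    ∃ W : Matrix m (Fin A.rank) ℝ, Wᵀ * W = 1 ∧ W * Wᵀ * A = A := by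
  let e := (WithLp.linearEquiv 2 ℝ (m → ℝ)).symm
  let K := (Submodule.span ℝ (Set.range Aᵀ)).map (e : (m → ℝ) →ₗ[ℝ] EuclideanSpace ℝ m)
  have hK : Module.finrank ℝ K = A.rank := by
    rw [rank_eq_finrank_span_cols]; exact LinearEquiv.finrank_map_eq e _
  let b := (stdOrthonormalBasis ℝ K).reindex (finCongr hK)
  refine ⟨Matrix.of fun i a => (b a : EuclideanSpace ℝ m) i, ?_, ?_⟩
  · ext a a'
    have h := orthonormal_iff_ite.1 b.orthonormal a a'
    rw [Submodule.coe_inner, PiLp.inner_apply] at h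
    rw [mul_apply, one_apply, ← h]
    exact Finset.sum_congr rfl fun i _ => (mul_comm _ _)
  · ext i j
    have hmem : e (Aᵀ j) ∈ K := Submodule.mem_map_of_mem (Submodule.subset_span ⟨j, rfl⟩)
    have h := congrArg (fun x : K => (x : EuclideanSpace ℝ m) i) (b.sum_repr' ⟨_, hmem⟩)
    simp only [Submodule.coe_sum, Submodule.coe_smul, WithLp.ofLp_sum, WithLp.ofLp_smul,
      Finset.sum_apply, Pi.smul_apply, smul_eq_mul, Submodule.coe_inner, PiLp.inner_apply] at h
    rw [Matrix.mul_assoc, mul_apply]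
    convert h using 2 with a
    · rw [mul_comm, mul_apply]
      simp only [transpose_apply, of_apply, Real.inner_apply]
      rfl
    · rfl

end Matrix

/-- Eckart–Young theorem: the rank-`k` SVD truncation `S_k` minimizes the Frobenius
distance to `S` among all matrices of rank at most `k`. -/
theorem eckart_young_frobenius
    (N M k : ℕ)
    (S : Matrix (Fin N) (Fin M) ℝ)
    (U : Matrix (Fin N) (Fin (min N M)) ℝ)
    (V : Matrix (Fin M) (Fin (min N M)) ℝ)
    (σ : Fin (min N M) → ℝ)
    (hU : Uᵀ * U = 1) (hV : Vᵀ * V = 1)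
    (hσnonneg : ∀ i, 0 ≤ σ i) (hσmono : Antitone σ)
    (hS : S = U * Matrix.diagonal σ * Vᵀ) :
    ∀ B : Matrix (Fin N) (Fin M) ℝ, B.rank ≤ k →
      Real.sqrt (∑ i, ∑ j,
          ((S - ∑ l ∈ Finset.univ.filter (fun l : Fin (min N M) => (l : ℕ) < k),
              σ l • Matrix.vecMulVec (fun a => U a l) (fun b => V b l)) i j) ^ 2)
        ≤ Real.sqrt (∑ i, ∑ j, ((S - B) i j) ^ 2) := by
  intro B hB
  obtain ⟨W, hW, hWB⟩ := B.exists_orthonormal_cols_mul_transpose_mul_eq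
  set s := Finset.univ.filter (fun l : Fin (min N M) => (l : ℕ) < k)
  set G := (Wᵀ * U)ᵀ * (Wᵀ * U)
  have hG₀ : ∀ l, 0 ≤ G l l := fun l => (posSemidef_transpose_mul_self _).diag_nonneg
  have hG₁ : ∀ l, G l l ≤ 1 := fun l => by
    simpa only [hU, one_apply_eq] using diag_transpose_mul_self_le hW U l
  have hGk : ∑ l, G l l ≤ k := by
    have := trace_transpose_mul_self_transpose_mul_le_card hU hW
    simp only [Fintype.card_fin] at this
    exact this.trans (by exact_mod_cast hB)
  have hWS : Wᵀ * S = Wᵀ * U * diagonal σ * Vᵀ := by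
    simp only [hS, Matrix.mul_assoc]
  rw [sum_sum_sq_eq_trace_transpose_mul_self, sum_sum_sq_eq_trace_transpose_mul_self]
  apply Real.sqrt_le_sqrt
  calc _ = ∑ l ∈ sᶜ, σ l ^ 2 := by rw [hS, trace_transpose_mul_self_sub_sum_eq hU hV]
    _ = ∑ l, σ l ^ 2 - ∑ l ∈ s, σ l ^ 2 := eq_sub_of_add_eq (Finset.sum_compl_add_sum s _)
    _ ≤ ∑ l, σ l ^ 2 - ∑ l, σ l ^ 2 * G l l := by
        gcongr
        exact Fin.sum_mul_le_sum_filter_lt_of_antitone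
          (fun a b hab => pow_le_pow_left₀ (hσnonneg b) (hσmono hab) 2)
          (fun l => sq_nonneg _) hG₀ hG₁ hGk
    _ = trace (Sᵀ * S) - trace ((Wᵀ * S)ᵀ * (Wᵀ * S)) := by
        rw [hWS, trace_transpose_mul_self_mul_diagonal_mul_transpose _ hV, hS,
          trace_transpose_mul_self_mul_diagonal_mul_transpose _ hV, hU]
        simp only [one_apply_eq, mul_one]
        rfl
    _ ≤ trace ((S - B)ᵀ * (S - B)) := trace_transpose_mul_self_sub_le W hWB S
end

section
/- If U is the left singular matrix of S (so S = UΣV*), then among all N×k matrices W with orthonormal columns, W = first k columns of U maximizes ‖W* S‖_F², and the maximum value equals the sum of the squares of the k largest singular values of S. -/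
open Matrix Finset

-- Frobenius norm squared equals trace of B * Bᵀ
lemma POD.frob_eq_trace {a b : Type*} [Fintype a] [Fintype b]
    (B : Matrix a b ℝ) :
    ∑ l, ∑ j, (B l j)^2 = Matrix.trace (B * Bᵀ) := by
  simp [Matrix.trace, Matrix.mul_apply, Matrix.diag, sq]

-- Σ Σᵀ is diagonal
lemma POD.sig_mul_sigT (N M : ℕ) (σ : Fin (min N M) → ℝ) :
    ((Matrix.of fun (i : Fin N) (j : Fin M) =>
        if h : (i : ℕ) = (j : ℕ) ∧ (i : ℕ) < min N M
        then σ ⟨(i : ℕ), h.2⟩ else 0) : Matrix (Fin N) (Fin M) ℝ) *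
    ((Matrix.of fun (i : Fin N) (j : Fin M) =>
        if h : (i : ℕ) = (j : ℕ) ∧ (i : ℕ) < min N M
        then σ ⟨(i : ℕ), h.2⟩ else 0) : Matrix (Fin N) (Fin M) ℝ)ᵀ =
    Matrix.diagonal (fun i : Fin N =>
      if h : (i : ℕ) < min N M then (σ ⟨(i : ℕ), h⟩)^2 else 0) := by
  ext i i'
  simp only [Matrix.mul_apply, Matrix.transpose_apply, Matrix.of_apply, Matrix.diagonal_apply]
  by_cases hii : i = i'
  · subst hii
    simp only [if_pos rfl]
    by_cases h : (i : ℕ) < min N M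
    · have hiM : (i : ℕ) < M := lt_of_lt_of_le h (Nat.min_le_right N M)
      rw [Finset.sum_eq_single (⟨(i : ℕ), hiM⟩ : Fin M)]
      · rw [dif_pos ⟨rfl, h⟩, dif_pos h]; simp [sq]
      · intro j _ hj
        rw [dif_neg, zero_mul]
        rintro ⟨h1, -⟩
        exact hj (by ext; exact h1.symm)
      · intro hmem; exact absurd (Finset.mem_univ _) hmem
    · rw [dif_neg h]
      apply Finset.sum_eq_zero
      intro j _
      rw [dif_neg, zero_mul]
      rintro ⟨-, h2⟩; exact h h2
  · rw [if_neg hii]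
    apply Finset.sum_eq_zero
    intro j _
    by_cases h2 : (i' : ℕ) = (j : ℕ) ∧ (i' : ℕ) < min N M
    · have hne : ¬((i : ℕ) = (j : ℕ) ∧ (i : ℕ) < min N M) := by
        rintro ⟨ha, -⟩
        exact hii (Fin.ext (by omega))
      rw [dif_neg hne, zero_mul]
    · rw [dif_neg h2, mul_zero]

-- key identity: ‖Wᵀ S‖² = ∑ d i * c i
lemma POD.key_identity (N M k : ℕ)
    (S : Matrix (Fin N) (Fin M) ℝ)
    (U : Matrix (Fin N) (Fin N) ℝ)
    (V : Matrix (Fin M) (Fin M) ℝ) (hV : Vᵀ * V = 1)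
    (σ : Fin (min N M) → ℝ)
    (hSVD : S = U * (Matrix.of fun (i : Fin N) (j : Fin M) =>
        if h : (i : ℕ) = (j : ℕ) ∧ (i : ℕ) < min N M
        then σ ⟨(i : ℕ), h.2⟩ else 0) * Vᵀ)
    (W : Matrix (Fin N) (Fin k) ℝ) :
    ∑ l, ∑ j, ((Wᵀ * S) l j)^2
      = ∑ i : Fin N, (if h : (i : ℕ) < min N M then (σ ⟨(i : ℕ), h⟩)^2 else 0) *
          (∑ l, ((Wᵀ * U) l i)^2) := by
  set Sig : Matrix (Fin N) (Fin M) ℝ := (Matrix.of fun (i : Fin N) (j : Fin M) =>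
        if h : (i : ℕ) = (j : ℕ) ∧ (i : ℕ) < min N M
        then σ ⟨(i : ℕ), h.2⟩ else 0) with hSig
  set B : Matrix (Fin k) (Fin N) ℝ := Wᵀ * U with hB
  set d : Fin N → ℝ := fun i => if h : (i : ℕ) < min N M then (σ ⟨(i : ℕ), h⟩)^2 else 0 with hd
  have h1 : Wᵀ * S = B * Sig * Vᵀ := by
    rw [hSVD, hB]; simp only [Matrix.mul_assoc]
  have h2 : (Wᵀ * S) * (Wᵀ * S)ᵀ = B * Matrix.diagonal d * Bᵀ := by
    rw [h1]
    rw [Matrix.transpose_mul, Matrix.transpose_mul, Matrix.transpose_transpose]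
    have : B * Sig * Vᵀ * (V * (Sigᵀ * Bᵀ)) = B * (Sig * Sigᵀ) * Bᵀ := by
      calc B * Sig * Vᵀ * (V * (Sigᵀ * Bᵀ))
          = B * Sig * (Vᵀ * V) * (Sigᵀ * Bᵀ) := by simp only [Matrix.mul_assoc]
        _ = B * (Sig * Sigᵀ) * Bᵀ := by rw [hV, Matrix.mul_one]; simp only [Matrix.mul_assoc]
    rw [this, POD.sig_mul_sigT]
  rw [POD.frob_eq_trace, h2]
  rw [Matrix.trace_mul_comm, ← Matrix.mul_assoc, Matrix.trace_mul_comm,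
    ← Matrix.mul_assoc]
  simp only [Matrix.trace, Matrix.diag, Matrix.diagonal_mul, Matrix.mul_apply,
    Matrix.transpose_apply]
  apply Finset.sum_congr rfl
  intro i _
  simp only [Matrix.diagonal_apply, ite_mul, zero_mul, Finset.sum_ite_eq, Finset.mem_univ,
    if_true]
  rw [Finset.mul_sum]
  apply Finset.sum_congr rfl
  intro l _
  rw [sq, mul_assoc]

-- sum over Fin N of the indicator-weighted top-k values
lemma POD.sum_indicator_eq (N M k : ℕ) (hkN : k ≤ N) (hk : k ≤ min N M)
    (σ : Fin (min N M) → ℝ) :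
    ∑ i : Fin N, (if h : (i : ℕ) < k then (σ ⟨(i : ℕ), lt_of_lt_of_le h hk⟩)^2 else 0)
      = ∑ l : Fin k, (σ (Fin.castLE hk l))^2 := by
  set G : ℕ → ℝ := fun n => if h : n < k then (σ ⟨n, lt_of_lt_of_le h hk⟩)^2 else 0 with hG
  have h1 : ∑ i : Fin N, (if h : (i : ℕ) < k then (σ ⟨(i : ℕ), lt_of_lt_of_le h hk⟩)^2 else 0)
      = ∑ n ∈ Finset.range N, G n := by
    rw [Fin.sum_univ_eq_sum_range (fun n => G n) N]
  have h2 : ∑ l : Fin k, (σ (Fin.castLE hk l))^2 = ∑ n ∈ Finset.range k, G n := by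
    rw [← Fin.sum_univ_eq_sum_range (fun n => G n) k]
    apply Finset.sum_congr rfl
    intro l _
    show _ = G (l : ℕ)
    rw [hG]
    simp only []
    rw [dif_pos l.isLt]
    rfl
  rw [h1, h2]
  symm
  apply Finset.sum_subset (Finset.range_subset_range.mpr hkN)
  intro x _ hx
  simp only [hG]
  rw [dif_neg (by simpa using hx)]

lemma POD.sum_ind (N k : ℕ) (hkN : k ≤ N) :
    ∑ i : Fin N, (if (i : ℕ) < k then (1:ℝ) else 0) = k := by
  rw [Fin.sum_univ_eq_sum_range (fun n => if n < k then (1:ℝ) else 0) N]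
  rw [← Finset.sum_subset (Finset.range_subset_range.mpr hkN)
    (fun x _ hx => if_neg (by simpa using hx))]
  rw [Finset.sum_congr rfl (fun x hx => if_pos (Finset.mem_range.mp hx))]
  simp

-- the scalar Ky Fan bound
lemma POD.scalar_bound (N M k : ℕ) (hk : k ≤ min N M)
    (σ : Fin (min N M) → ℝ) (hnn : ∀ j, 0 ≤ σ j) (hmono : Antitone σ)
    (c : Fin N → ℝ) (h0 : ∀ i, 0 ≤ c i) (h1 : ∀ i, c i ≤ 1)
    (hs : ∑ i, c i = k) :
    ∑ i : Fin N, (if h : (i : ℕ) < min N M then (σ ⟨(i : ℕ), h⟩)^2 else 0) * c i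
      ≤ ∑ l : Fin k, (σ (Fin.castLE hk l))^2 := by
  have hkN : k ≤ N := hk.trans (Nat.min_le_left N M)
  rcases Nat.eq_zero_or_pos k with hk0 | hk0
  · subst hk0
    have hc : ∀ i, c i = 0 := by
      intro i
      have := Finset.sum_eq_zero_iff_of_nonneg (fun j _ => h0 j) |>.mp (by simpa using hs)
      exact this i (Finset.mem_univ i)
    simp [hc]
  · have hk1 : k - 1 < min N M := by omega
    set t : ℝ := σ ⟨k - 1, hk1⟩ with ht
    have htnn : 0 ≤ t := hnn _
    have key : ∀ i : Fin N,
        (if h : (i : ℕ) < min N M then (σ ⟨(i : ℕ), h⟩)^2 else 0) * c i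
        ≤ (if h : (i : ℕ) < k then (σ ⟨(i : ℕ), lt_of_lt_of_le h hk⟩)^2 else 0)
          + t^2 * (c i - (if (i : ℕ) < k then (1:ℝ) else 0)) := by
      intro i
      by_cases hik : (i : ℕ) < k
      · have him : (i : ℕ) < min N M := lt_of_lt_of_le hik hk
        rw [dif_pos him, dif_pos hik, if_pos hik]
        have hle : t ≤ σ ⟨(i : ℕ), him⟩ := by
          apply hmono
          exact Fin.mk_le_mk.mpr (by omega)
        have := hnn ⟨(i : ℕ), him⟩
        have hc1 := h1 i
        have heq : σ ⟨(i : ℕ), lt_of_lt_of_le hik hk⟩ = σ ⟨(i : ℕ), him⟩ := rfl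
        rw [heq]
        have h2 : t^2 ≤ (σ ⟨(i : ℕ), him⟩)^2 := by nlinarith
        nlinarith [mul_nonneg (sub_nonneg.mpr h2) (sub_nonneg.mpr hc1)]
      · rw [dif_neg hik, if_neg hik]
        by_cases him : (i : ℕ) < min N M
        · rw [dif_pos him]
          have hle : σ ⟨(i : ℕ), him⟩ ≤ t := by
            apply hmono
            exact Fin.mk_le_mk.mpr (by omega)
          have := hnn ⟨(i : ℕ), him⟩
          have hc0 := h0 i
          have h2 : (σ ⟨(i : ℕ), him⟩)^2 ≤ t^2 := by nlinarith
          nlinarith [mul_nonneg (sub_nonneg.mpr h2) hc0]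
        · rw [dif_neg him]
          have hc0 := h0 i
          nlinarith
    calc ∑ i : Fin N, (if h : (i : ℕ) < min N M then (σ ⟨(i : ℕ), h⟩)^2 else 0) * c i
        ≤ ∑ i : Fin N, ((if h : (i : ℕ) < k then (σ ⟨(i : ℕ), lt_of_lt_of_le h hk⟩)^2 else 0)
          + t^2 * (c i - (if (i : ℕ) < k then (1:ℝ) else 0))) :=
          Finset.sum_le_sum (fun i _ => key i)
      _ = (∑ i : Fin N, (if h : (i : ℕ) < k then (σ ⟨(i : ℕ), lt_of_lt_of_le h hk⟩)^2 else 0))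
          + t^2 * ((∑ i, c i) - (∑ i : Fin N, (if (i : ℕ) < k then (1:ℝ) else 0))) := by
          rw [Finset.sum_add_distrib, ← Finset.mul_sum, Finset.sum_sub_distrib]
      _ = ∑ l : Fin k, (σ (Fin.castLE hk l))^2 := by
          rw [hs, POD.sum_ind N k hkN, sub_self, mul_zero, add_zero,
            POD.sum_indicator_eq N M k hkN hk]

-- diagonal entries of BᵀB are at most 1 when B has orthonormal rows
lemma POD.diag_le_one {k n : ℕ} (B : Matrix (Fin k) (Fin n) ℝ)
    (hB : B * Bᵀ = 1) (i : Fin n) :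
    ∑ l, (B l i)^2 ≤ 1 := by
  set P : Matrix (Fin n) (Fin n) ℝ := Bᵀ * B with hP
  have hPsymm : Pᵀ = P := by
    rw [hP, Matrix.transpose_mul, Matrix.transpose_transpose]
  have hPidem : P * P = P := by
    rw [hP, Matrix.mul_assoc, ← Matrix.mul_assoc B, hB, Matrix.one_mul]
  have hc : ∑ l, (B l i)^2 = P i i := by
    rw [hP]
    simp [Matrix.mul_apply, sq]
  rw [hc]
  have h1 : P i i = ∑ j, (P i j)^2 := by
    conv_lhs => rw [← hPidem]
    rw [Matrix.mul_apply]
    apply Finset.sum_congr rfl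
    intro j _
    have : P j i = P i j := by
      conv_lhs => rw [← hPsymm]
      rfl
    rw [this, sq]
  have h2 : (P i i)^2 ≤ ∑ j, (P i j)^2 :=
    Finset.single_le_sum (f := fun j => (P i j)^2) (fun j _ => sq_nonneg _)
      (Finset.mem_univ i)
  have h3 : 0 ≤ P i i := by
    rw [← h1] at h2
    nlinarith [h1 ▸ (Finset.sum_nonneg (fun j (_ : j ∈ Finset.univ) => sq_nonneg (P i j)))]
  nlinarith [h1 ▸ h2]

lemma POD.sum_diag_eq {k n : ℕ} (B : Matrix (Fin k) (Fin n) ℝ)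
    (hB : B * Bᵀ = 1) :
    ∑ i : Fin n, ∑ l, (B l i)^2 = k := by
  have : ∑ i : Fin n, ∑ l, (B l i)^2 = Matrix.trace (B * Bᵀ) := by
    simp only [Matrix.trace, Matrix.diag, Matrix.mul_apply, Matrix.transpose_apply, sq]
    rw [Finset.sum_comm]
  rw [this, hB, Matrix.trace_one]
  simp

lemma POD.c_Uk (N M k : ℕ) (hkN : k ≤ N)
    (U : Matrix (Fin N) (Fin N) ℝ) (hU : Uᵀ * U = 1) (i : Fin N) :
    ∑ l : Fin k, (((U.submatrix id (Fin.castLE hkN))ᵀ * U) l i)^2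
      = if (i : ℕ) < k then (1:ℝ) else 0 := by
  have hent : ∀ (l : Fin k),
      ((U.submatrix id (Fin.castLE hkN))ᵀ * U) l i
        = if Fin.castLE hkN l = i then (1:ℝ) else 0 := by
    intro l
    have : ((U.submatrix id (Fin.castLE hkN))ᵀ * U) l i
        = (Uᵀ * U) (Fin.castLE hkN l) i := by
      simp [Matrix.mul_apply, Matrix.submatrix_apply]
    rw [this, hU, Matrix.one_apply]
  by_cases h : (i : ℕ) < k
  · rw [if_pos h]
    rw [Finset.sum_eq_single (⟨(i : ℕ), h⟩ : Fin k)]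
    · have heq : Fin.castLE hkN ⟨(i : ℕ), h⟩ = i := Fin.ext rfl
      rw [hent, if_pos heq]
      norm_num
    · intro l _ hl
      have hne : Fin.castLE hkN l ≠ i := by
        intro hc
        apply hl
        apply Fin.val_injective
        have := congrArg Fin.val hc
        simpa using this
      rw [hent, if_neg hne]
      norm_num
    · intro hmem; exact absurd (Finset.mem_univ _) hmem
  · rw [if_neg h]
    apply Finset.sum_eq_zero
    intro l _
    have hne : Fin.castLE hkN l ≠ i := by
      intro hc
      apply h
      rw [← congrArg Fin.val hc]
      exact l.isLt
    rw [hent, if_neg hne]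
    norm_num

/-- Variational characterization of POD modes: among all `N × k` matrices `W` with
orthonormal columns, the first `k` left singular vectors maximize `‖Wᵀ S‖_F²`, and the
maximum equals the sum of the squares of the `k` largest singular values. -/
theorem pod_modes_optimal_basis
    (N M k : ℕ) (hk : k ≤ min N M)
    (S : Matrix (Fin N) (Fin M) ℝ)
    (U : Matrix (Fin N) (Fin N) ℝ) (hU : Uᵀ * U = 1)
    (V : Matrix (Fin M) (Fin M) ℝ) (hV : Vᵀ * V = 1)
    (σ : Fin (min N M) → ℝ) (hσnonneg : ∀ j, 0 ≤ σ j) (hσmono : Antitone σ)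
    (hSVD : S = U * (Matrix.of fun (i : Fin N) (j : Fin M) =>
        if h : (i : ℕ) = (j : ℕ) ∧ (i : ℕ) < min N M
        then σ ⟨(i : ℕ), h.2⟩ else 0) * Vᵀ) :
    let Uk : Matrix (Fin N) (Fin k) ℝ :=
      U.submatrix id (Fin.castLE (hk.trans (Nat.min_le_left N M)))
    (∀ W : Matrix (Fin N) (Fin k) ℝ, Wᵀ * W = 1 →
      (∑ l, ∑ j, ((Wᵀ * S) l j) ^ 2) ≤ (∑ l, ∑ j, ((Ukᵀ * S) l j) ^ 2)) ∧
    (∑ l, ∑ j, ((Ukᵀ * S) l j) ^ 2) = ∑ l : Fin k, σ (Fin.castLE hk l) ^ 2 := by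
  intro Uk
  have hkN : k ≤ N := hk.trans (Nat.min_le_left N M)
  have hUUT : U * Uᵀ = 1 := mul_eq_one_comm.mp hU
  have hUkval : (∑ l, ∑ j, ((Ukᵀ * S) l j) ^ 2) = ∑ l : Fin k, σ (Fin.castLE hk l) ^ 2 := by
    rw [POD.key_identity N M k S U V hV σ hSVD Uk]
    have hc : ∀ i : Fin N, ∑ l, ((Ukᵀ * U) l i)^2 = if (i : ℕ) < k then (1:ℝ) else 0 :=
      POD.c_Uk N M k hkN U hU
    calc ∑ i : Fin N, (if h : (i : ℕ) < min N M then (σ ⟨(i : ℕ), h⟩)^2 else 0) *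
          (∑ l, ((Ukᵀ * U) l i)^2)
        = ∑ i : Fin N, (if h : (i : ℕ) < k then (σ ⟨(i : ℕ), lt_of_lt_of_le h hk⟩)^2 else 0) := by
          apply Finset.sum_congr rfl
          intro i _
          rw [hc i]
          by_cases h : (i : ℕ) < k
          · rw [if_pos h, dif_pos h, dif_pos (lt_of_lt_of_le h hk), mul_one]
          · rw [if_neg h, dif_neg h, mul_zero]
      _ = _ := POD.sum_indicator_eq N M k hkN hk σ
  refine ⟨?_, hUkval⟩
  intro W hW
  rw [hUkval, POD.key_identity N M k S U V hV σ hSVD W]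
  set B : Matrix (Fin k) (Fin N) ℝ := Wᵀ * U with hB
  have hBBT : B * Bᵀ = 1 := by
    rw [hB, Matrix.transpose_mul, Matrix.transpose_transpose]
    calc Wᵀ * U * (Uᵀ * W) = Wᵀ * (U * Uᵀ) * W := by simp only [Matrix.mul_assoc]
      _ = 1 := by rw [hUUT, Matrix.mul_one, hW]
  exact POD.scalar_bound N M k hk σ hσnonneg hσmono (fun i => ∑ l, (B l i)^2)
    (fun i => Finset.sum_nonneg (fun l _ => sq_nonneg _))
    (fun i => POD.diag_le_one B hBBT i)
    (POD.sum_diag_eq B hBBT)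
end
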